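/- arXiv:2004.00354 — 5 statements merged into one kernel-verified Lean document; each statement's English description precedes it below -/
import Mathlib

section
/- Let M be an (3+n)×(3+n) real symmetric matrix with block form M = [[0, D],[Dᵀ, R]] where D is 3×n and R is n×n symmetric. Then M has at least three eigenvalues λ with |λ| ≤ ‖D‖_F (the Frobenius norm of D). -/
open Matrix Finset RealInnerProductSpace

/-- The (3+n)×(3+n) real symmetric seesaw matrix M = [[0,D],[Dᵀ,R]] has at least three
eigenvalues (with multiplicity) of absolute value at most the Frobenius norm of D. -/
theorem seesaw_three_light (n : ℕ) (D : Matrix (Fin 3) (Fin n) ℝ)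
    (R : Matrix (Fin n) (Fin n) ℝ) (hR : R.IsHermitian)
    (hM : (Matrix.fromBlocks 0 D Dᵀ R).IsHermitian) :
    ∃ S : Finset (Fin 3 ⊕ Fin n), 3 ≤ S.card ∧
      ∀ i ∈ S, |hM.eigenvalues i| ≤ Real.sqrt (∑ i, ∑ j, (D i j) ^ 2) := by
  classical
  set M := Matrix.fromBlocks 0 D Dᵀ R with hMdef
  set K : ℝ := ∑ i, ∑ j, (D i j) ^ 2 with hK
  have hK0 : 0 ≤ K := by positivity
  set c : ℝ := Real.sqrt K with hcdef
  have hc0 : 0 ≤ c := Real.sqrt_nonneg _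
  have hc2 : c ^ 2 = K := Real.sq_sqrt hK0
  set S : Finset (Fin 3 ⊕ Fin n) :=
    Finset.univ.filter (fun i => |hM.eigenvalues i| ≤ c) with hS
  refine ⟨S, ?_, fun i hi => (Finset.mem_filter.mp hi).2⟩
  by_contra hlt
  push_neg at hlt
  set T : Finset (Fin 3 ⊕ Fin n) := Sᶜ with hT
  have hcardι : Fintype.card (Fin 3 ⊕ Fin n) = 3 + n := by simp
  have hTcard : n + 1 ≤ T.card := by
    have h := Finset.card_compl S
    rw [← hT] at h
    omega
  set u : OrthonormalBasis (Fin 3 ⊕ Fin n) ℝ (EuclideanSpace ℝ (Fin 3 ⊕ Fin n)) :=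
    hM.eigenvectorBasis with hu
  set μ : (Fin 3 ⊕ Fin n) → ℝ := hM.eigenvalues with hμ
  have hμT : ∀ i ∈ T, c < |μ i| := by
    intro i hi
    have h1 : i ∉ S := Finset.mem_compl.mp hi
    rw [hS] at h1
    simp only [Finset.mem_filter, Finset.mem_univ, true_and, not_le] at h1
    exact h1
  set L : EuclideanSpace ℝ (Fin 3 ⊕ Fin n) →ₗ[ℝ] EuclideanSpace ℝ (Fin 3 ⊕ Fin n) :=
    Matrix.toEuclideanLin M with hLdef
  have hL : ∀ i, L (u i) = μ i • u i := by
    intro i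
    have h := hM.mulVec_eigenvectorBasis i
    apply (WithLp.equiv 2 ((Fin 3 ⊕ Fin n) → ℝ)).injective
    simp only [hLdef, WithLp.equiv_apply, Matrix.piLp_ofLp_toEuclideanLin, WithLp.ofLp_smul,
      Matrix.toLin'_apply]
    exact h
  set π : EuclideanSpace ℝ (Fin 3 ⊕ Fin n) →ₗ[ℝ] (Fin n → ℝ) :=
    (LinearMap.funLeft ℝ ℝ Sum.inr).comp
      (WithLp.linearEquiv 2 ℝ ((Fin 3 ⊕ Fin n) → ℝ)).toLinearMap with hπ
  set V : Submodule ℝ (EuclideanSpace ℝ (Fin 3 ⊕ Fin n)) := LinearMap.ker π with hV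
  have hVrank : Module.finrank ℝ V = 3 := by
    have hπsurj : Function.Surjective π := by
      intro w
      refine ⟨(WithLp.linearEquiv 2 ℝ ((Fin 3 ⊕ Fin n) → ℝ)).symm
        (Sum.elim (0 : Fin 3 → ℝ) w), ?_⟩
      funext j
      rfl
    have h := LinearMap.finrank_range_add_finrank_ker π
    rw [LinearMap.range_eq_top.mpr hπsurj, finrank_top, ← hV] at h
    have h1 : Module.finrank ℝ (Fin n → ℝ) = n := by simp
    have h2 : Module.finrank ℝ (EuclideanSpace ℝ (Fin 3 ⊕ Fin n)) = 3 + n := by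
      rw [finrank_euclideanSpace, hcardι]
    rw [h1, h2] at h
    omega
  set W : Submodule ℝ (EuclideanSpace ℝ (Fin 3 ⊕ Fin n)) :=
    Submodule.span ℝ (Set.range (fun i : ↥T => u i)) with hW
  have hLI : LinearIndependent ℝ (fun i : ↥T => u i) :=
    (u.orthonormal.linearIndependent).comp _ Subtype.val_injective
  have hWrank : T.card ≤ Module.finrank ℝ W := by
    rw [hW]
    rw [finrank_span_eq_card hLI, Fintype.card_coe]
  have hfin : Module.finrank ℝ (EuclideanSpace ℝ (Fin 3 ⊕ Fin n)) = 3 + n := by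
    rw [finrank_euclideanSpace, hcardι]
  have hnontriv : ∃ v : EuclideanSpace ℝ (Fin 3 ⊕ Fin n), v ∈ V ⊓ W ∧ v ≠ 0 := by
    have hsum := Submodule.finrank_sup_add_finrank_inf_eq V W
    have hle : Module.finrank ℝ ↥(V ⊔ W) ≤ 3 + n := by
      rw [← hfin]; exact Submodule.finrank_le _
    have hpos : 0 < Module.finrank ℝ ↥(V ⊓ W) := by omega
    obtain ⟨x, hx⟩ := Module.finrank_pos_iff_exists_ne_zero.mp hpos
    exact ⟨x.1, x.2, fun h => hx (Subtype.ext h)⟩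
  obtain ⟨v, hvVW, hv0⟩ := hnontriv
  set C : (Fin 3 ⊕ Fin n) → ℝ := fun i => u.repr v i with hC
  have hCzero : ∀ i ∉ T, C i = 0 := by
    intro i hiT
    have hvW : v ∈ W := hvVW.2
    have horth : W ≤ (ℝ ∙ (u i))ᗮ := by
      rw [hW, Submodule.span_le]
      rintro _ ⟨j, rfl⟩
      rw [SetLike.mem_coe, Submodule.mem_orthogonal_singleton_iff_inner_right]
      have hne : i ≠ (j : Fin 3 ⊕ Fin n) := fun h => hiT (h ▸ j.2)
      exact u.orthonormal.2 hne
    have h0 : ⟪u i, v⟫ = 0 :=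
      Submodule.mem_orthogonal_singleton_iff_inner_right.mp (horth hvW)
    simp only [hC]
    rw [OrthonormalBasis.repr_apply_apply, h0]
  have hvsum : v = ∑ i ∈ T, C i • u i := by
    have h1 : ∑ i ∈ T, C i • u i = ∑ i : Fin 3 ⊕ Fin n, C i • u i :=
      Finset.sum_subset (Finset.subset_univ T)
        (fun i _ hi => by rw [hCzero i hi, zero_smul])
    rw [h1]
    exact (u.sum_repr v).symm
  have hLv : L v = ∑ i ∈ T, (μ i * C i) • u i := by
    conv_lhs => rw [hvsum]
    rw [map_sum]
    refine Finset.sum_congr rfl fun i _ => ?_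
    rw [L.map_smul, hL, smul_smul, mul_comm]
  have hvv : ⟪v, v⟫ = ∑ i ∈ T, C i ^ 2 := by
    conv_lhs => rw [hvsum]
    rw [u.orthonormal.inner_sum]
    simp [sq]
  have hLvLv : ⟪L v, L v⟫ = ∑ i ∈ T, (μ i * C i) ^ 2 := by
    rw [hLv, u.orthonormal.inner_sum]
    simp [sq]
  have hvinr : ∀ j, v (Sum.inr j) = 0 := by
    intro j
    exact congrFun (LinearMap.mem_ker.mp hvVW.1) j
  have hinner : ∀ x y : EuclideanSpace ℝ (Fin 3 ⊕ Fin n), ⟪x, y⟫ = ∑ i, x i * y i := by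
    intro x y
    simp [PiLp.inner_apply, RCLike.inner_apply, conj_trivial, mul_comm]
  have hupper : ⟪L v, L v⟫ ≤ K * ⟪v, v⟫ := by
    have hcomp1 : ∀ k : Fin 3, (L v) (Sum.inl k) = 0 := by
      intro k
      show (M *ᵥ ⇑v) (Sum.inl k) = 0
      simp [hMdef, Matrix.mulVec, dotProduct, Fintype.sum_sum_type, hvinr]
    have hcomp2 : ∀ j : Fin n, (L v) (Sum.inr j) = ∑ k, D k j * v (Sum.inl k) := by
      intro j
      show (M *ᵥ ⇑v) (Sum.inr j) = _
      simp [hMdef, Matrix.mulVec, dotProduct, Fintype.sum_sum_type, hvinr,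
        Matrix.transpose_apply]
    calc ⟪L v, L v⟫ = ∑ j : Fin n, (∑ k, D k j * v (Sum.inl k)) ^ 2 := by
          rw [hinner, Fintype.sum_sum_type]
          simp [hcomp1, hcomp2, pow_two]
      _ ≤ ∑ j : Fin n, (∑ k, (D k j) ^ 2) * (∑ k, (v (Sum.inl k)) ^ 2) := by
          refine Finset.sum_le_sum fun j _ => ?_
          exact Finset.sum_mul_sq_le_sq_mul_sq _ _ _
      _ = K * ⟪v, v⟫ := by
          rw [← Finset.sum_mul, hinner v v, Fintype.sum_sum_type]
          have h1 : (∑ j : Fin n, ∑ k : Fin 3, D k j ^ 2) = K := by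
            rw [hK]
            exact Finset.sum_comm
          have h2 : (∑ j : Fin n, v (Sum.inr j) * v (Sum.inr j)) = 0 := by
            simp [hvinr]
          rw [h1, h2, add_zero]
          simp only [pow_two]
  have hexist : ∃ i ∈ T, C i ≠ 0 := by
    by_contra h
    push_neg at h
    apply hv0
    rw [hvsum]
    exact Finset.sum_eq_zero fun i hi => by rw [h i hi, zero_smul]
  obtain ⟨i0, hi0T, hi0⟩ := hexist
  have hlower : K * ⟪v, v⟫ < ⟪L v, L v⟫ := by
    rw [hvv, hLvLv, Finset.mul_sum]
    refine Finset.sum_lt_sum (fun i hi => ?_) ⟨i0, hi0T, ?_⟩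
    · have h1 : c ^ 2 ≤ μ i ^ 2 := by
        have := pow_lt_pow_left₀ (hμT i hi) hc0 two_ne_zero
        rw [sq_abs] at this
        exact this.le
      calc K * C i ^ 2 = c ^ 2 * C i ^ 2 := by rw [hc2]
        _ ≤ μ i ^ 2 * C i ^ 2 := mul_le_mul_of_nonneg_right h1 (sq_nonneg _)
        _ = (μ i * C i) ^ 2 := by ring
    · have hC2 : 0 < C i0 ^ 2 := (sq_nonneg _).lt_of_ne (Ne.symm (pow_ne_zero 2 hi0))
      have h1 : K < μ i0 ^ 2 := by
        have := pow_lt_pow_left₀ (hμT i0 hi0T) hc0 two_ne_zero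
        rwa [hc2, sq_abs] at this
      calc K * C i0 ^ 2 < μ i0 ^ 2 * C i0 ^ 2 := mul_lt_mul_of_pos_right h1 hC2
        _ = (μ i0 * C i0) ^ 2 := by ring
  exact lt_irrefl _ (hlower.trans_le hupper)
end

section
/- Let A and B be m×n complex matrices with singular values arranged in non-increasing order. Then for every index j, |σⱼ(A+B) − σⱼ(A)| ≤ σ₁(B), where σ₁(B) is the largest singular value (operator norm) of B. -/
open Matrix

/-- The singular values of a complex m×n matrix: square roots of the eigenvalues of Aᴴ·A. -/
noncomputable def singVals {m n : ℕ} (A : Matrix (Fin m) (Fin n) ℂ) : Fin n → ℝ :=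
  fun i => Real.sqrt ((Matrix.isHermitian_conjTranspose_mul_self A).eigenvalues i)

section WeylAux

open scoped InnerProductSpace ComplexConjugate ComplexOrder

variable {m n : ℕ}

lemma gram_apply_basis (M : Matrix (Fin m) (Fin n) ℂ) (i : Fin n) :
    Matrix.toEuclideanLin (Mᴴ * M) ((Matrix.isHermitian_conjTranspose_mul_self M).eigenvectorBasis i)
      = ((Matrix.isHermitian_conjTranspose_mul_self M).eigenvalues i : ℂ) •
        (Matrix.isHermitian_conjTranspose_mul_self M).eigenvectorBasis i := by
  have h := (Matrix.isHermitian_conjTranspose_mul_self M).mulVec_eigenvectorBasis i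
  apply PiLp.ext
  intro k
  have h2 := congrFun h k
  simp only [toEuclideanLin_apply, PiLp.toLp_apply,
    Pi.smul_apply, PiLp.smul_apply, smul_eq_mul] at *
  rw [h2, Complex.real_smul]

lemma normsq_toEuclideanLin (M : Matrix (Fin m) (Fin n) ℂ) (x : EuclideanSpace ℂ (Fin n)) :
    ‖Matrix.toEuclideanLin M x‖ ^ 2
      = ∑ i, (Matrix.isHermitian_conjTranspose_mul_self M).eigenvalues i *
          ‖⟪((Matrix.isHermitian_conjTranspose_mul_self M).eigenvectorBasis i : EuclideanSpace ℂ (Fin n)), x⟫_ℂ‖ ^ 2 := by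
  set hG := Matrix.isHermitian_conjTranspose_mul_self M with hGdef
  set v := hG.eigenvectorBasis
  set μ := hG.eigenvalues
  have hGL : Matrix.toEuclideanLin (Mᴴ * M) x
      = LinearMap.adjoint (Matrix.toEuclideanLin M) (Matrix.toEuclideanLin M x) := by
    rw [← Matrix.toEuclideanLin_conjTranspose_eq_adjoint, toEuclideanLin_apply,
      toEuclideanLin_apply, toEuclideanLin_apply, ← mulVec_mulVec]
  have h1 : (‖Matrix.toEuclideanLin M x‖ : ℝ) ^ 2
      = RCLike.re (⟪x, Matrix.toEuclideanLin (Mᴴ * M) x⟫_ℂ) := by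
    rw [hGL, LinearMap.adjoint_inner_right, inner_self_eq_norm_sq]
  rw [h1, ← v.sum_inner_mul_inner x (Matrix.toEuclideanLin (Mᴴ * M) x)]
  rw [map_sum]
  congr 1
  funext i
  have hsym : ⟪(v i : EuclideanSpace ℂ (Fin n)), Matrix.toEuclideanLin (Mᴴ * M) x⟫_ℂ
      = (μ i : ℂ) * ⟪(v i : EuclideanSpace ℂ (Fin n)), x⟫_ℂ := by
    rw [← (Matrix.isHermitian_iff_isSymmetric.1 hG) (v i) x, gram_apply_basis,
      inner_smul_left]
    simp [Complex.conj_ofReal]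
    rfl
  rw [hsym]
  have hz : ⟪x, (v i : EuclideanSpace ℂ (Fin n))⟫_ℂ
      = (starRingEnd ℂ) ⟪(v i : EuclideanSpace ℂ (Fin n)), x⟫_ℂ := (inner_conj_symm _ _).symm
  rw [hz, mul_left_comm, RCLike.conj_mul]
  simp [RCLike.conj_mul]
  left
  norm_cast

lemma parseval (b : OrthonormalBasis (Fin n) ℂ (EuclideanSpace ℂ (Fin n)))
    (x : EuclideanSpace ℂ (Fin n)) : ‖x‖ ^ 2 = ∑ i, ‖⟪b i, x⟫_ℂ‖ ^ 2 := by
  have h := b.sum_inner_mul_inner x x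
  have h1 : ‖x‖ ^ 2 = RCLike.re (⟪x, x⟫_ℂ) := (inner_self_eq_norm_sq x).symm
  rw [h1, ← h, map_sum]
  congr 1
  funext i
  have hz : ⟪x, b i⟫_ℂ = (starRingEnd ℂ) ⟪b i, x⟫_ℂ := (inner_conj_symm _ _).symm
  rw [hz, RCLike.conj_mul]
  norm_cast

lemma inner_eq_zero_of_mem_span (b : OrthonormalBasis (Fin n) ℂ (EuclideanSpace ℂ (Fin n)))
    (S : Finset (Fin n)) {x : EuclideanSpace ℂ (Fin n)}
    (hx : x ∈ Submodule.span ℂ (⇑b '' ↑S)) {k : Fin n} (hk : k ∉ S) :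
    ⟪b k, x⟫_ℂ = 0 := by
  have hle : Submodule.span ℂ (⇑b '' ↑S) ≤ LinearMap.ker (innerₛₗ ℂ (b k)) := by
    rw [Submodule.span_le]
    rintro y ⟨i, hi, rfl⟩
    simp only [SetLike.mem_coe, LinearMap.mem_ker, innerₛₗ_apply_apply]
    exact b.orthonormal.2 (fun h => hk (h ▸ hi))
  simpa using hle hx

lemma finrank_span_orthonormal (b : OrthonormalBasis (Fin n) ℂ (EuclideanSpace ℂ (Fin n)))
    (S : Finset (Fin n)) :
    Module.finrank ℂ (Submodule.span ℂ (⇑b '' ↑S)) = S.card := by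
  have hli : LinearIndependent ℂ (fun i : {x // x ∈ S} => b i) :=
    b.orthonormal.linearIndependent.comp _ Subtype.val_injective
  have himg : (⇑b '' ↑S) = Set.range (fun i : {x // x ∈ S} => b i) := by
    ext y; simp [Set.mem_image]
  rw [himg, finrank_span_eq_card hli, Fintype.card_coe]

lemma low_bound (M : Matrix (Fin m) (Fin n) ℂ) (S : Finset (Fin n)) (a : ℝ) (ha : 0 ≤ a)
    (hS : ∀ i ∈ S, a ^ 2 ≤ (Matrix.isHermitian_conjTranspose_mul_self M).eigenvalues i)
    {x : EuclideanSpace ℂ (Fin n)}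
    (hx : x ∈ Submodule.span ℂ
      (⇑(Matrix.isHermitian_conjTranspose_mul_self M).eigenvectorBasis '' ↑S)) :
    a * ‖x‖ ≤ ‖Matrix.toEuclideanLin M x‖ := by
  set hG := Matrix.isHermitian_conjTranspose_mul_self M
  have key : a ^ 2 * ‖x‖ ^ 2 ≤ ‖Matrix.toEuclideanLin M x‖ ^ 2 := by
    rw [normsq_toEuclideanLin, parseval hG.eigenvectorBasis x, Finset.mul_sum]
    apply Finset.sum_le_sum
    intro i _
    by_cases hi : i ∈ S
    · exact mul_le_mul_of_nonneg_right (hS i hi) (by positivity)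
    · rw [inner_eq_zero_of_mem_span _ S hx hi]; simp
  calc a * ‖x‖ = Real.sqrt ((a * ‖x‖) ^ 2) := (Real.sqrt_sq (by positivity)).symm
    _ ≤ Real.sqrt (‖Matrix.toEuclideanLin M x‖ ^ 2) := by
        apply Real.sqrt_le_sqrt; rw [mul_pow]; exact key
    _ = ‖Matrix.toEuclideanLin M x‖ := Real.sqrt_sq (norm_nonneg _)

lemma up_bound (M : Matrix (Fin m) (Fin n) ℂ) (S : Finset (Fin n)) (a : ℝ) (ha : 0 ≤ a)
    (hS : ∀ i ∈ S, (Matrix.isHermitian_conjTranspose_mul_self M).eigenvalues i ≤ a ^ 2)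
    {x : EuclideanSpace ℂ (Fin n)}
    (hx : x ∈ Submodule.span ℂ
      (⇑(Matrix.isHermitian_conjTranspose_mul_self M).eigenvectorBasis '' ↑S)) :
    ‖Matrix.toEuclideanLin M x‖ ≤ a * ‖x‖ := by
  set hG := Matrix.isHermitian_conjTranspose_mul_self M
  have key : ‖Matrix.toEuclideanLin M x‖ ^ 2 ≤ a ^ 2 * ‖x‖ ^ 2 := by
    rw [normsq_toEuclideanLin, parseval hG.eigenvectorBasis x, Finset.mul_sum]
    apply Finset.sum_le_sum
    intro i _
    by_cases hi : i ∈ S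
    · exact mul_le_mul_of_nonneg_right (hS i hi) (by positivity)
    · rw [inner_eq_zero_of_mem_span _ S hx hi]; simp
  calc ‖Matrix.toEuclideanLin M x‖ = Real.sqrt (‖Matrix.toEuclideanLin M x‖ ^ 2) :=
        (Real.sqrt_sq (norm_nonneg _)).symm
    _ ≤ Real.sqrt ((a * ‖x‖) ^ 2) := by
        apply Real.sqrt_le_sqrt; rw [mul_pow]; exact key
    _ = a * ‖x‖ := Real.sqrt_sq (by positivity)

lemma singVals_nonneg (M : Matrix (Fin m) (Fin n) ℂ) (i : Fin n) : 0 ≤ singVals M i :=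
  Real.sqrt_nonneg _

lemma sq_singVals (M : Matrix (Fin m) (Fin n) ℂ) (i : Fin n) :
    singVals M i ^ 2 = (Matrix.isHermitian_conjTranspose_mul_self M).eigenvalues i :=
  Real.sq_sqrt ((Matrix.posSemidef_conjTranspose_mul_self M).eigenvalues_nonneg i)

lemma global_bound [NeZero n] (B : Matrix (Fin m) (Fin n) ℂ) (x : EuclideanSpace ℂ (Fin n)) :
    ‖Matrix.toEuclideanLin B x‖ ≤ (⨆ i, singVals B i) * ‖x‖ := by
  have hbdd : BddAbove (Set.range (singVals B)) := (Set.finite_range _).bddAbove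
  have hle : ∀ i, singVals B i ≤ ⨆ i, singVals B i := fun i => le_ciSup hbdd i
  have ha : 0 ≤ ⨆ i, singVals B i :=
    le_trans (singVals_nonneg B (Classical.arbitrary _)) (hle _)
  apply up_bound B Finset.univ _ ha
  · intro i _
    rw [← sq_singVals]
    exact pow_le_pow_left₀ (singVals_nonneg B i) (hle i) 2
  · have : Submodule.span ℂ
        (⇑(Matrix.isHermitian_conjTranspose_mul_self B).eigenvectorBasis '' ↑(Finset.univ : Finset (Fin n))) = ⊤ := by
      rw [Finset.coe_univ, Set.image_univ]
      simpa using (Matrix.isHermitian_conjTranspose_mul_self B).eigenvectorBasis.toBasis.span_eq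
    rw [this]; trivial

lemma eigvals_congr {k : ℕ} {M N : Matrix (Fin k) (Fin k) ℂ} (h : M = N)
    (hM : M.IsHermitian) (hN : N.IsHermitian) : hM.eigenvalues = hN.eigenvalues := by
  subst h; rfl

lemma singVals_neg (B : Matrix (Fin m) (Fin n) ℂ) : singVals (-B) = singVals B := by
  funext i
  unfold singVals
  rw [congrFun (eigvals_congr (show (-B)ᴴ * (-B) = Bᴴ * B by simp) _
    (Matrix.isHermitian_conjTranspose_mul_self B)) i]

lemma weyl_step (A B : Matrix (Fin m) (Fin n) ℂ)
    (s t : Fin n → ℝ) (hs : Antitone s) (ht : Antitone t)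
    (hse : ∃ e : Equiv.Perm (Fin n), s = singVals A ∘ e)
    (hte : ∃ e : Equiv.Perm (Fin n), t = singVals (A + B) ∘ e)
    (j : Fin n) : s j - t j ≤ ⨆ i, singVals B i := by
  have : NeZero n := ⟨fun h => (h ▸ j).elim0⟩
  obtain ⟨e, hes⟩ := hse
  obtain ⟨f, hft⟩ := hte
  set hGA := Matrix.isHermitian_conjTranspose_mul_self A with hGAdef
  set hGC := Matrix.isHermitian_conjTranspose_mul_self (A + B) with hGCdef
  set S : Finset (Fin n) := (Finset.Iic j).image e
  set T : Finset (Fin n) := (Finset.Ici j).image f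
  set SubS := Submodule.span ℂ (⇑hGA.eigenvectorBasis '' ↑S)
  set SubT := Submodule.span ℂ (⇑hGC.eigenvectorBasis '' ↑T)
  have hcardS : S.card = (j : ℕ) + 1 := by
    rw [Finset.card_image_of_injective _ e.injective, Fin.card_Iic]
  have hcardT : T.card = n - (j : ℕ) := by
    rw [Finset.card_image_of_injective _ f.injective, Fin.card_Ici]
  have hrS : Module.finrank ℂ SubS = (j : ℕ) + 1 := by
    rw [show SubS = _ from rfl, finrank_span_orthonormal, hcardS]
  have hrT : Module.finrank ℂ SubT = n - (j : ℕ) := by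
    rw [show SubT = _ from rfl, finrank_span_orthonormal, hcardT]
  have hsum := Submodule.finrank_sup_add_finrank_inf_eq SubS SubT
  have hsup : Module.finrank ℂ ↥(SubS ⊔ SubT) ≤ n :=
    (Submodule.finrank_le _).trans_eq finrank_euclideanSpace_fin
  have hj : (j : ℕ) < n := j.isLt
  have hpos : 0 < Module.finrank ℂ ↥(SubS ⊓ SubT) := by omega
  obtain ⟨⟨x, hxmem⟩, hx0⟩ := Module.finrank_pos_iff_exists_ne_zero.mp hpos
  have hxS : x ∈ SubS := hxmem.1
  have hxT : x ∈ SubT := hxmem.2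
  have hxne : x ≠ 0 := fun h => hx0 (Subtype.ext h)
  have hxpos : (0:ℝ) < ‖x‖ := norm_pos_iff.mpr hxne
  have hsj : 0 ≤ s j := by rw [congrFun hes j]; exact singVals_nonneg A (e j)
  have htj : 0 ≤ t j := by rw [congrFun hft j]; exact singVals_nonneg (A + B) (f j)
  -- lower bound for A on SubS
  have hlow : s j * ‖x‖ ≤ ‖Matrix.toEuclideanLin A x‖ := by
    apply low_bound A S (s j) hsj _ hxS
    intro i hi
    obtain ⟨i', hi', rfl⟩ := Finset.mem_image.mp hi
    rw [← hGAdef, ← sq_singVals]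
    have : s j ≤ s i' := hs (Finset.mem_Iic.mp hi')
    calc s j ^ 2 ≤ s i' ^ 2 := pow_le_pow_left₀ hsj this 2
      _ = singVals A (e i') ^ 2 := by rw [congrFun hes i']; rfl
  -- upper bound for A+B on SubT
  have hup : ‖Matrix.toEuclideanLin (A + B) x‖ ≤ t j * ‖x‖ := by
    apply up_bound (A + B) T (t j) htj _ hxT
    intro i hi
    obtain ⟨i', hi', rfl⟩ := Finset.mem_image.mp hi
    rw [← hGCdef, ← sq_singVals]
    have h1 : t i' ≤ t j := ht (Finset.mem_Ici.mp hi')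
    have h2 : 0 ≤ t i' := by rw [congrFun hft i']; exact singVals_nonneg (A + B) (f i')
    calc singVals (A + B) (f i') ^ 2 = t i' ^ 2 := by rw [congrFun hft i']; rfl
      _ ≤ t j ^ 2 := pow_le_pow_left₀ h2 h1 2
  have hB := global_bound B x
  have hsplit : Matrix.toEuclideanLin A x
      = Matrix.toEuclideanLin (A + B) x - Matrix.toEuclideanLin B x := by
    rw [← LinearMap.sub_apply, ← map_sub, add_sub_cancel_right]
  have htri : ‖Matrix.toEuclideanLin A x‖
      ≤ ‖Matrix.toEuclideanLin (A + B) x‖ + ‖Matrix.toEuclideanLin B x‖ := by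
    rw [hsplit]; exact norm_sub_le _ _
  have : s j * ‖x‖ ≤ (t j + ⨆ i, singVals B i) * ‖x‖ := by
    rw [add_mul]; linarith
  have := le_of_mul_le_mul_right this hxpos
  linarith


end WeylAux

/-- Weyl's inequality for singular values: the j-th largest singular values of A+B and A
differ by at most the largest singular value of B. -/
theorem weyl_singular_value_perturbation (m n : ℕ) (A B : Matrix (Fin m) (Fin n) ℂ)
    (s t : Fin n → ℝ) (hs : Antitone s) (ht : Antitone t)
    (hse : ∃ e : Equiv.Perm (Fin n), s = singVals A ∘ e)
    (hte : ∃ e : Equiv.Perm (Fin n), t = singVals (A + B) ∘ e)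
    (j : Fin n) :
    |t j - s j| ≤ ⨆ i, singVals B i := by
  rw [abs_sub_le_iff]
  constructor
  · have h1 : ∃ e : Equiv.Perm (Fin n), s = singVals ((A + B) + (-B)) ∘ e := by
      rw [add_neg_cancel_right]; exact hse
    have h2 := weyl_step (A + B) (-B) t s ht hs hte h1 j
    rwa [singVals_neg] at h2
  · exact weyl_step A B s t hs ht hse hte j
end

section
/- Let M = [[0, D],[Dᵀ, R]] be real symmetric with D a 3×n real matrix and R an n×n real symmetric matrix. Suppose every eigenvalue μ of R satisfies |μ| > 2·σ₁(D), where σ₁(D) is the largest singular value of D. Then exactly three eigenvalues λ of M (counted with multiplicity) satisfy |λ| ≤ σ₁(D), and the remaining n eigenvalues satisfy |λ| > σ₁(D). -/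
open Matrix
open scoped Matrix.Norms.L2Operator

section SeesawAux

lemma seesaw_euclid_norm_sq {ι : Type*} [Fintype ι] (x : EuclideanSpace ℝ ι) :
    ‖x‖ ^ 2 = ∑ i, (x i) ^ 2 := by
  rw [EuclideanSpace.norm_eq, Real.sq_sqrt (by positivity)]
  simp [sq_abs]

lemma seesaw_mulVec_sq_le {m k : Type*} [Fintype m] [Fintype k] [DecidableEq m] [DecidableEq k]
    (A : Matrix m k ℝ) (x : k → ℝ) :
    ∑ i, ((A *ᵥ x) i) ^ 2 ≤ ‖A‖ ^ 2 * ∑ j, (x j) ^ 2 := by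
  have h := A.l2_opNorm_mulVec ((EuclideanSpace.equiv k ℝ).symm x)
  have h1 : ‖((EuclideanSpace.equiv m ℝ).symm (A *ᵥ x) : EuclideanSpace ℝ m)‖ ^ 2 =
      ∑ i, ((A *ᵥ x) i) ^ 2 := seesaw_euclid_norm_sq _
  have h2 : ‖((EuclideanSpace.equiv k ℝ).symm x : EuclideanSpace ℝ k)‖ ^ 2 =
      ∑ j, (x j) ^ 2 := seesaw_euclid_norm_sq _
  calc ∑ i, ((A *ᵥ x) i) ^ 2 = _ := h1.symm
    _ ≤ (‖A‖ * ‖((EuclideanSpace.equiv k ℝ).symm x : EuclideanSpace ℝ k)‖) ^ 2 := by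
        apply pow_le_pow_left₀ (norm_nonneg _) h
    _ = ‖A‖ ^ 2 * ∑ j, (x j) ^ 2 := by rw [mul_pow, h2]

lemma seesaw_norm_sq_orthonormal_sum {E : Type*} [NormedAddCommGroup E] [InnerProductSpace ℝ E]
    {ι : Type*} {v : ι → E} (hv : Orthonormal ℝ v) (s : Finset ι) (c : ι → ℝ) :
    ‖∑ i ∈ s, c i • v i‖ ^ 2 = ∑ i ∈ s, (c i) ^ 2 := by
  rw [← real_inner_self_eq_norm_sq, hv.inner_sum]
  simp [sq]

lemma seesaw_mulVec_eigen_sum {ι : Type*} [Fintype ι] [DecidableEq ι] {A : Matrix ι ι ℝ}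
    (hA : A.IsHermitian) (s : Finset ι) (c : ι → ℝ) :
    A *ᵥ ((∑ i ∈ s, c i • hA.eigenvectorBasis i : EuclideanSpace ℝ ι))
      = ((∑ i ∈ s, (hA.eigenvalues i * c i) • hA.eigenvectorBasis i : EuclideanSpace ℝ ι)) := by
  induction s using Finset.cons_induction with
  | empty =>
      show A *ᵥ (0 : ι → ℝ) = (0 : ι → ℝ)
      exact Matrix.mulVec_zero A
  | cons a s ha ih =>
      rw [Finset.sum_cons, Finset.sum_cons]
      show A *ᵥ ((c a • (hA.eigenvectorBasis a : ι → ℝ))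
          + (∑ i ∈ s, c i • hA.eigenvectorBasis i : EuclideanSpace ℝ ι)) = _
      have hb : A *ᵥ (hA.eigenvectorBasis a : ι → ℝ)
          = hA.eigenvalues a • (hA.eigenvectorBasis a : ι → ℝ) := hA.mulVec_eigenvectorBasis a
      rw [Matrix.mulVec_add, Matrix.mulVec_smul, hb, ih]
      show (c a • (hA.eigenvalues a • (hA.eigenvectorBasis a : ι → ℝ)))
          + (∑ i ∈ s, (hA.eigenvalues i * c i) • hA.eigenvectorBasis i : EuclideanSpace ℝ ι) = _
      rw [smul_smul, mul_comm]
      rw [WithLp.ofLp_add, WithLp.ofLp_smul]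

lemma seesaw_eigen_lower {n : ℕ} {A : Matrix (Fin n) (Fin n) ℝ} (hA : A.IsHermitian) {c : ℝ}
    (hc : 0 ≤ c) (h : ∀ i, c < |hA.eigenvalues i|) (y : EuclideanSpace ℝ (Fin n)) (hy : y ≠ 0) :
    c ^ 2 * ‖y‖ ^ 2 < ‖(EuclideanSpace.equiv (Fin n) ℝ).symm (A *ᵥ y)‖ ^ 2 := by
  classical
  have hon := hA.eigenvectorBasis.orthonormal
  set r : Fin n → ℝ := fun i => hA.eigenvectorBasis.repr y i with hrdef
  have hrepr : y = ∑ i, r i • hA.eigenvectorBasis i := (hA.eigenvectorBasis.sum_repr y).symm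
  have hex : ∃ i, r i ≠ 0 := by
    by_contra hall
    push_neg at hall
    apply hy
    rw [hrepr]
    simp [hall]
  obtain ⟨i₀, hi₀⟩ := hex
  have e1 : ‖y‖ ^ 2 = ∑ i, r i ^ 2 := by
    conv_lhs => rw [hrepr]
    exact seesaw_norm_sq_orthonormal_sum hon Finset.univ r
  have e2 : ‖(EuclideanSpace.equiv (Fin n) ℝ).symm (A *ᵥ y)‖ ^ 2
      = ∑ i, (hA.eigenvalues i * r i) ^ 2 := by
    conv_lhs => rw [hrepr, seesaw_mulVec_eigen_sum hA Finset.univ r]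
    exact seesaw_norm_sq_orthonormal_sum hon Finset.univ _
  rw [e1, e2, Finset.mul_sum]
  have key : ∀ i, c ^ 2 ≤ hA.eigenvalues i ^ 2 := by
    intro i
    nlinarith [h i, hc, sq_abs (hA.eigenvalues i), abs_nonneg (hA.eigenvalues i)]
  apply Finset.sum_lt_sum
  · intro i _
    rw [mul_pow]
    nlinarith [key i, sq_nonneg (r i)]
  · refine ⟨i₀, Finset.mem_univ _, ?_⟩
    rw [mul_pow]
    have hr2 : 0 < r i₀ ^ 2 := by positivity
    have hce : c ^ 2 < hA.eigenvalues i₀ ^ 2 := by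
      nlinarith [h i₀, hc, sq_abs (hA.eigenvalues i₀), abs_nonneg (hA.eigenvalues i₀)]
    nlinarith

lemma seesaw_eigen_lower' {n : ℕ} {A : Matrix (Fin n) (Fin n) ℝ} (hA : A.IsHermitian) {c : ℝ}
    (hc : 0 ≤ c) (h : ∀ i, c < |hA.eigenvalues i|) (y : Fin n → ℝ) (hy : ∃ j, y j ≠ 0) :
    c ^ 2 * ∑ j, (y j) ^ 2 < ∑ j, ((A *ᵥ y) j) ^ 2 := by
  have hyE : ((EuclideanSpace.equiv (Fin n) ℝ).symm y) ≠ 0 := by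
    intro h0
    obtain ⟨j, hj⟩ := hy
    exact hj (congrFun (congrArg (fun z : EuclideanSpace ℝ (Fin n) => (z : Fin n → ℝ)) h0) j)
  have e1 : ‖(EuclideanSpace.equiv (Fin n) ℝ).symm y‖ ^ 2 = ∑ j, (y j) ^ 2 :=
    seesaw_euclid_norm_sq _
  have e2 : ‖(EuclideanSpace.equiv (Fin n) ℝ).symm (A *ᵥ y)‖ ^ 2 = ∑ j, ((A *ᵥ y) j) ^ 2 :=
    seesaw_euclid_norm_sq _
  have h3 : c ^ 2 * ‖(EuclideanSpace.equiv (Fin n) ℝ).symm y‖ ^ 2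
      < ‖(EuclideanSpace.equiv (Fin n) ℝ).symm (A *ᵥ y)‖ ^ 2 :=
    seesaw_eigen_lower hA hc h _ hyE
  rw [e1, e2] at h3
  exact h3

end SeesawAux

set_option maxHeartbeats 1000000 in
/-- If every eigenvalue of R has modulus greater than 2σ₁(D), then the real symmetric
seesaw matrix M = [[0,D],[Dᵀ,R]] has exactly three eigenvalues of absolute value at most
σ₁(D), and the remaining n eigenvalues have absolute value greater than σ₁(D). -/
theorem seesaw_exactly_three_light (n : ℕ) (D : Matrix (Fin 3) (Fin n) ℝ)
    (R : Matrix (Fin n) (Fin n) ℝ) (hR : R.IsHermitian)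
    (hM : (Matrix.fromBlocks 0 D Dᵀ R).IsHermitian)
    (hgap : ∀ i, 2 * ‖D‖ < |hR.eigenvalues i|) :
    ∃ S : Finset (Fin 3 ⊕ Fin n), S.card = 3 ∧
      (∀ i ∈ S, |hM.eigenvalues i| ≤ ‖D‖) ∧
      (∀ i ∉ S, ‖D‖ < |hM.eigenvalues i|) := by
  classical
  have hon := hM.eigenvectorBasis.orthonormal
  have hσ0 : (0:ℝ) ≤ ‖D‖ := norm_nonneg D
  set S : Finset (Fin 3 ⊕ Fin n) :=
    Finset.univ.filter (fun i => |hM.eigenvalues i| ≤ ‖D‖) with hSdef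
  have hmemS : ∀ i, i ∈ S ↔ |hM.eigenvalues i| ≤ ‖D‖ := by
    intro i; simp [hSdef]
  -- Bound 1 : S.card ≤ 3
  have lin1 : LinearIndependent ℝ
      (fun i : {x // x ∈ S} => (fun j : Fin 3 => hM.eigenvectorBasis i.1 (Sum.inl j))) := by
    rw [Fintype.linearIndependent_iff]
    intro g hg
    set c : (Fin 3 ⊕ Fin n) → ℝ := fun i => if h : i ∈ S then g ⟨i, h⟩ else 0 with hcdef
    have hcg : ∀ i : {x // x ∈ S}, c i.1 = g i := fun i => dif_pos i.2
    set v : EuclideanSpace ℝ (Fin 3 ⊕ Fin n) := ∑ i ∈ S, c i • hM.eigenvectorBasis i with hvdef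
    have hvx : ∀ j, v (Sum.inl j) = 0 := by
      intro j
      have e0 : v (Sum.inl j) = ∑ i ∈ S, (c i • hM.eigenvectorBasis i) (Sum.inl j) := by
        rw [hvdef]
        induction S using Finset.cons_induction with
        | empty => rfl
        | cons a s ha ih => rw [Finset.sum_cons, Finset.sum_cons, ← ih]; rfl
      have e1 : ∀ i ∈ S, (c i • hM.eigenvectorBasis i) (Sum.inl j)
          = c i * hM.eigenvectorBasis i (Sum.inl j) := fun i _ => rfl
      have e2 : ∑ i ∈ S, c i * hM.eigenvectorBasis i (Sum.inl j)
          = ∑ i : {x // x ∈ S}, c i.1 * hM.eigenvectorBasis i.1 (Sum.inl j) :=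
        (Finset.sum_coe_sort S _).symm
      have e3 : ∑ i : {x // x ∈ S}, c i.1 * hM.eigenvectorBasis i.1 (Sum.inl j)
          = ∑ i : {x // x ∈ S}, g i * hM.eigenvectorBasis i.1 (Sum.inl j) := by
        refine Finset.sum_congr rfl fun i _ => by rw [hcg i]
      have e4 : ∑ i : {x // x ∈ S}, g i * hM.eigenvectorBasis i.1 (Sum.inl j) = 0 := by
        have := congrFun hg j
        simpa using this
      rw [e0, Finset.sum_congr rfl e1, e2, e3, e4]
    set y : Fin n → ℝ := fun j => v (Sum.inr j) with hydef
    -- norm computations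
    have n1 : ∑ k, (v k) ^ 2 = ∑ i ∈ S, (c i) ^ 2 := by
      have a1 : ‖v‖ ^ 2 = ∑ k, (v k) ^ 2 := seesaw_euclid_norm_sq v
      have a2 : ‖v‖ ^ 2 = ∑ i ∈ S, (c i) ^ 2 := by
        rw [hvdef]; exact seesaw_norm_sq_orthonormal_sum hon S c
      exact a1.symm.trans a2
    have hMv : (Matrix.fromBlocks 0 D Dᵀ R) *ᵥ v
        = ∑ i ∈ S, (hM.eigenvalues i * c i) • hM.eigenvectorBasis i := by
      rw [hvdef]; exact seesaw_mulVec_eigen_sum hM S c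
    have n2 : ∑ k, (((Matrix.fromBlocks 0 D Dᵀ R) *ᵥ v) k) ^ 2
        = ∑ i ∈ S, (hM.eigenvalues i * c i) ^ 2 := by
      have a1 : ‖(EuclideanSpace.equiv (Fin 3 ⊕ Fin n) ℝ).symm
          ((Matrix.fromBlocks 0 D Dᵀ R) *ᵥ v)‖ ^ 2
          = ∑ k, (((Matrix.fromBlocks 0 D Dᵀ R) *ᵥ v) k) ^ 2 := seesaw_euclid_norm_sq _
      have a2 : ‖(EuclideanSpace.equiv (Fin 3 ⊕ Fin n) ℝ).symm
          ((Matrix.fromBlocks 0 D Dᵀ R) *ᵥ v)‖ ^ 2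
          = ∑ i ∈ S, (hM.eigenvalues i * c i) ^ 2 := by
        rw [hMv]; exact seesaw_norm_sq_orthonormal_sum hon S _
      exact a1.symm.trans a2
    -- block structure
    have hblock : (Matrix.fromBlocks 0 D Dᵀ R) *ᵥ v = Sum.elim (D *ᵥ y) (R *ᵥ y) := by
      have h0 : ((v : (Fin 3 ⊕ Fin n) → ℝ) ∘ Sum.inl) = (0 : Fin 3 → ℝ) := funext hvx
      have h1 : ((v : (Fin 3 ⊕ Fin n) → ℝ) ∘ Sum.inr) = y := rfl
      rw [Matrix.fromBlocks_mulVec, h0, h1]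
      simp [Matrix.zero_mulVec, Matrix.mulVec_zero]
    -- split sums
    have hsplitv : ∑ k, (v k) ^ 2 = (∑ j, (v (Sum.inl j)) ^ 2) + ∑ j, (y j) ^ 2 :=
      Fintype.sum_sum_type _
    have hsplitM : ∑ k, (((Matrix.fromBlocks 0 D Dᵀ R) *ᵥ v) k) ^ 2
        = (∑ j, ((D *ᵥ y) j) ^ 2) + ∑ j, ((R *ᵥ y) j) ^ 2 := by
      rw [hblock]
      exact Fintype.sum_sum_type _
    have hinl0 : ∑ j, (v (Sum.inl j)) ^ 2 = 0 := by
      apply Finset.sum_eq_zero; intro j _; rw [hvx j]; ring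
    have hYa : ∑ j, (y j) ^ 2 = ∑ i ∈ S, (c i) ^ 2 := by linarith [n1, hsplitv, hinl0]
    -- eigenvalue upper bound on S
    have h9 : ∑ i ∈ S, (hM.eigenvalues i * c i) ^ 2 ≤ ‖D‖ ^ 2 * ∑ i ∈ S, (c i) ^ 2 := by
      rw [Finset.mul_sum]
      apply Finset.sum_le_sum
      intro i hi
      have hiS : |hM.eigenvalues i| ≤ ‖D‖ := (hmemS i).1 hi
      have hl : hM.eigenvalues i ^ 2 ≤ ‖D‖ ^ 2 := by
        nlinarith [sq_abs (hM.eigenvalues i), abs_nonneg (hM.eigenvalues i)]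
      nlinarith [hl, sq_nonneg (c i)]
    -- conclude each coefficient vanishes
    intro i0
    by_contra hg0
    have hc0 : c i0.1 ≠ 0 := by rw [hcg i0]; exact hg0
    have hapos : 0 < ∑ i ∈ S, (c i) ^ 2 := by
      have h1' : (c i0.1) ^ 2 ≤ ∑ i ∈ S, (c i) ^ 2 :=
        Finset.single_le_sum (f := fun i => (c i) ^ 2) (fun i _ => sq_nonneg _) i0.2
      have : 0 < (c i0.1) ^ 2 := by positivity
      linarith
    have hyne : ∃ j, y j ≠ 0 := by
      by_contra hall
      push_neg at hall
      have : ∑ j, (y j) ^ 2 = 0 := Finset.sum_eq_zero fun j _ => by rw [hall j]; ring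
      rw [hYa] at this
      linarith
    have h10 : (2 * ‖D‖) ^ 2 * ∑ j, (y j) ^ 2 < ∑ j, ((R *ᵥ y) j) ^ 2 :=
      seesaw_eigen_lower' hR (by positivity) hgap y hyne
    rw [hYa] at h10
    have hD0 : 0 ≤ ∑ j, ((D *ᵥ y) j) ^ 2 := by positivity
    have hnn : 0 ≤ ‖D‖ ^ 2 * ∑ i ∈ S, (c i) ^ 2 :=
      mul_nonneg (sq_nonneg _) (le_of_lt hapos)
    nlinarith [n2, hsplitM, h9, h10, hD0, hnn]
  have hcard1 : S.card ≤ 3 := by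
    have h := lin1.fintype_card_le_finrank
    rw [Module.finrank_fintype_fun_eq_card, Fintype.card_fin, Fintype.card_coe] at h
    exact h
  -- Bound 2 : Sᶜ.card ≤ n
  have hmemT : ∀ i, i ∈ Sᶜ → ‖D‖ < |hM.eigenvalues i| := by
    intro i hi
    have := Finset.mem_compl.mp hi
    rw [hmemS i] at this
    exact lt_of_not_ge this
  have hDT : ‖Dᵀ‖ = ‖D‖ := by
    have : Dᴴ = Dᵀ := by ext i j; simp [Matrix.conjTranspose_apply]
    rw [← this, Matrix.l2_opNorm_conjTranspose]
  have lin2 : LinearIndependent ℝ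
      (fun i : {x // x ∈ Sᶜ} => (fun j : Fin n => hM.eigenvectorBasis i.1 (Sum.inr j))) := by
    rw [Fintype.linearIndependent_iff]
    intro g hg
    set c : (Fin 3 ⊕ Fin n) → ℝ := fun i => if h : i ∈ Sᶜ then g ⟨i, h⟩ else 0 with hcdef
    have hcg : ∀ i : {x // x ∈ Sᶜ}, c i.1 = g i := fun i => dif_pos i.2
    set v : EuclideanSpace ℝ (Fin 3 ⊕ Fin n) := ∑ i ∈ Sᶜ, c i • hM.eigenvectorBasis i with hvdef
    have hvy : ∀ j, v (Sum.inr j) = 0 := by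
      intro j
      have e0 : v (Sum.inr j) = ∑ i ∈ Sᶜ, (c i • hM.eigenvectorBasis i) (Sum.inr j) := by
        rw [hvdef]
        induction Sᶜ using Finset.cons_induction with
        | empty => rfl
        | cons a s ha ih => rw [Finset.sum_cons, Finset.sum_cons, ← ih]; rfl
      have e1 : ∀ i ∈ Sᶜ, (c i • hM.eigenvectorBasis i) (Sum.inr j)
          = c i * hM.eigenvectorBasis i (Sum.inr j) := fun i _ => rfl
      have e2 : ∑ i ∈ Sᶜ, c i * hM.eigenvectorBasis i (Sum.inr j)
          = ∑ i : {x // x ∈ Sᶜ}, c i.1 * hM.eigenvectorBasis i.1 (Sum.inr j) :=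
        (Finset.sum_coe_sort Sᶜ _).symm
      have e3 : ∑ i : {x // x ∈ Sᶜ}, c i.1 * hM.eigenvectorBasis i.1 (Sum.inr j)
          = ∑ i : {x // x ∈ Sᶜ}, g i * hM.eigenvectorBasis i.1 (Sum.inr j) := by
        refine Finset.sum_congr rfl fun i _ => by rw [hcg i]
      have e4 : ∑ i : {x // x ∈ Sᶜ}, g i * hM.eigenvectorBasis i.1 (Sum.inr j) = 0 := by
        have := congrFun hg j
        simpa using this
      rw [e0, Finset.sum_congr rfl e1, e2, e3, e4]
    set x : Fin 3 → ℝ := fun j => v (Sum.inl j) with hxdef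
    have n1 : ∑ k, (v k) ^ 2 = ∑ i ∈ Sᶜ, (c i) ^ 2 := by
      have a1 : ‖v‖ ^ 2 = ∑ k, (v k) ^ 2 := seesaw_euclid_norm_sq v
      have a2 : ‖v‖ ^ 2 = ∑ i ∈ Sᶜ, (c i) ^ 2 := by
        rw [hvdef]; exact seesaw_norm_sq_orthonormal_sum hon Sᶜ c
      exact a1.symm.trans a2
    have hMv : (Matrix.fromBlocks 0 D Dᵀ R) *ᵥ v
        = ∑ i ∈ Sᶜ, (hM.eigenvalues i * c i) • hM.eigenvectorBasis i := by
      rw [hvdef]; exact seesaw_mulVec_eigen_sum hM Sᶜ c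
    have n2 : ∑ k, (((Matrix.fromBlocks 0 D Dᵀ R) *ᵥ v) k) ^ 2
        = ∑ i ∈ Sᶜ, (hM.eigenvalues i * c i) ^ 2 := by
      have a1 : ‖(EuclideanSpace.equiv (Fin 3 ⊕ Fin n) ℝ).symm
          ((Matrix.fromBlocks 0 D Dᵀ R) *ᵥ v)‖ ^ 2
          = ∑ k, (((Matrix.fromBlocks 0 D Dᵀ R) *ᵥ v) k) ^ 2 := seesaw_euclid_norm_sq _
      have a2 : ‖(EuclideanSpace.equiv (Fin 3 ⊕ Fin n) ℝ).symm
          ((Matrix.fromBlocks 0 D Dᵀ R) *ᵥ v)‖ ^ 2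
          = ∑ i ∈ Sᶜ, (hM.eigenvalues i * c i) ^ 2 := by
        rw [hMv]; exact seesaw_norm_sq_orthonormal_sum hon Sᶜ _
      exact a1.symm.trans a2
    have hblock : (Matrix.fromBlocks 0 D Dᵀ R) *ᵥ v
        = Sum.elim (0 : Fin 3 → ℝ) (Dᵀ *ᵥ x) := by
      have h0 : ((v : (Fin 3 ⊕ Fin n) → ℝ) ∘ Sum.inr) = (0 : Fin n → ℝ) := funext hvy
      have h1 : ((v : (Fin 3 ⊕ Fin n) → ℝ) ∘ Sum.inl) = x := rfl
      rw [Matrix.fromBlocks_mulVec, h0, h1]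
      simp [Matrix.zero_mulVec, Matrix.mulVec_zero]
    have hsplitv : ∑ k, (v k) ^ 2 = (∑ j, (x j) ^ 2) + ∑ j, (v (Sum.inr j)) ^ 2 :=
      Fintype.sum_sum_type _
    have hsplitM : ∑ k, (((Matrix.fromBlocks 0 D Dᵀ R) *ᵥ v) k) ^ 2
        = (∑ j, ((0 : Fin 3 → ℝ) j) ^ 2) + ∑ j, ((Dᵀ *ᵥ x) j) ^ 2 := by
      rw [hblock]
      exact Fintype.sum_sum_type _
    have hinr0 : ∑ j, (v (Sum.inr j)) ^ 2 = 0 := by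
      apply Finset.sum_eq_zero; intro j _; rw [hvy j]; ring
    have hzero0 : ∑ j, ((0 : Fin 3 → ℝ) j) ^ 2 = 0 := by simp
    have hXa : ∑ j, (x j) ^ 2 = ∑ i ∈ Sᶜ, (c i) ^ 2 := by linarith [n1, hsplitv, hinr0]
    have h7 : ∑ j, ((Dᵀ *ᵥ x) j) ^ 2 ≤ ‖Dᵀ‖ ^ 2 * ∑ j, (x j) ^ 2 := seesaw_mulVec_sq_le Dᵀ x
    rw [hDT, hXa] at h7
    intro i0
    by_contra hg0
    have hc0 : c i0.1 ≠ 0 := by rw [hcg i0]; exact hg0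
    -- strict lower bound
    have h8 : ‖D‖ ^ 2 * ∑ i ∈ Sᶜ, (c i) ^ 2 < ∑ i ∈ Sᶜ, (hM.eigenvalues i * c i) ^ 2 := by
      rw [Finset.mul_sum]
      apply Finset.sum_lt_sum
      · intro i hi
        have hiT := hmemT i hi
        have hl : ‖D‖ ^ 2 ≤ hM.eigenvalues i ^ 2 := by
          nlinarith [sq_abs (hM.eigenvalues i), abs_nonneg (hM.eigenvalues i), norm_nonneg D]
        nlinarith [hl, sq_nonneg (c i)]
      · refine ⟨i0.1, i0.2, ?_⟩
        have hiT := hmemT i0.1 i0.2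
        have hcp : 0 < (c i0.1) ^ 2 := by positivity
        have hl : ‖D‖ ^ 2 < hM.eigenvalues i0.1 ^ 2 := by
          nlinarith [sq_abs (hM.eigenvalues i0.1), abs_nonneg (hM.eigenvalues i0.1),
            norm_nonneg D]
        nlinarith [hl, hcp]
    linarith [n2, hsplitM, hzero0, h7, h8]
  have hcard2 : Sᶜ.card ≤ n := by
    have h := lin2.fintype_card_le_finrank
    rw [Module.finrank_fintype_fun_eq_card, Fintype.card_fin, Fintype.card_coe] at h
    exact h
  have htotal : S.card + Sᶜ.card = 3 + n := by
    rw [Finset.card_add_card_compl]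
    simp
  refine ⟨S, by omega, fun i hi => (hmemS i).1 hi, fun i hi => ?_⟩
  have : i ∈ Sᶜ := Finset.mem_compl.mpr hi
  exact hmemT i this
end

section
/- Let A and B be Hermitian operators on a finite-dimensional inner product space. Let E be the orthogonal projection onto the span of eigenvectors of A with eigenvalues in [a,b], and let F⊥ be the orthogonal projection onto the span of eigenvectors of B with eigenvalues outside (a−δ, b+δ) for some δ > 0. Then for the operator norm, ‖E F⊥‖ ≤ ‖A − B‖ / δ. -/
open Matrix
open scoped Matrix.Norms.L2Operator

lemma dk_diag_norm_le {n : ℕ} (v : Fin n → ℂ) (C : ℝ) (hC : 0 ≤ C)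
    (h : ∀ i, ‖v i‖ ≤ C) : ‖Matrix.diagonal v‖ ≤ C := by
  rw [Matrix.l2_opNorm_def]
  refine ContinuousLinearMap.opNorm_le_bound _ hC fun x => ?_
  have hx : (LinearEquiv.trans Matrix.toEuclideanLin LinearMap.toContinuousLinearMap
      (Matrix.diagonal v)) x
      = (WithLp.equiv 2 (Fin n → ℂ)).symm (Matrix.diagonal v *ᵥ (WithLp.equiv 2 (Fin n → ℂ)) x) :=
    rfl
  rw [hx]
  rw [EuclideanSpace.norm_eq, EuclideanSpace.norm_eq]
  rw [← Real.sqrt_sq hC, ← Real.sqrt_mul (by positivity)]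
  apply Real.sqrt_le_sqrt
  rw [Finset.mul_sum]
  apply Finset.sum_le_sum
  intro i _
  have : ‖(WithLp.equiv 2 (Fin n → ℂ)).symm (Matrix.diagonal v *ᵥ (WithLp.equiv 2 (Fin n → ℂ)) x) i‖
      = ‖v i * x i‖ := by
    simp [Matrix.mulVec_diagonal]
  rw [this, norm_mul, mul_pow]
  have := h i
  nlinarith [sq_nonneg (‖x i‖), mul_le_mul this this (norm_nonneg (v i)) hC]

lemma dk_sandwich {n : ℕ} (P X Q : Matrix (Fin n) (Fin n) ℂ)
    (hP : ‖P‖ ≤ 1) (hQ : ‖Q‖ ≤ 1) : ‖P * X * Q‖ ≤ ‖X‖ := by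
  have h1 := Matrix.l2_opNorm_mul (P * X) Q
  have h2 := Matrix.l2_opNorm_mul P X
  nlinarith [norm_nonneg (P * X), norm_nonneg X, norm_nonneg P, norm_nonneg Q]

set_option maxHeartbeats 1000000 in
/-- Davis–Kahan sin Θ theorem (operator-norm version): if E is the spectral projection of
the Hermitian matrix A for the interval [a,b] and F⊥ is the spectral projection of the
Hermitian matrix B for the complement of (a−δ, b+δ), then ‖E·F⊥‖ ≤ ‖A−B‖/δ. -/
theorem davis_kahan (n : ℕ) (A B : Matrix (Fin n) (Fin n) ℂ)
    (hA : A.IsHermitian) (hB : B.IsHermitian)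
    (a b δ : ℝ) (hab : a ≤ b) (hδ : 0 < δ)
    (E Fp : Matrix (Fin n) (Fin n) ℂ)
    (hE : E = (hA.eigenvectorUnitary : Matrix (Fin n) (Fin n) ℂ) *
      Matrix.diagonal
        (fun i => if a ≤ hA.eigenvalues i ∧ hA.eigenvalues i ≤ b then (1 : ℂ) else 0) *
      (hA.eigenvectorUnitary : Matrix (Fin n) (Fin n) ℂ)ᴴ)
    (hF : Fp = (hB.eigenvectorUnitary : Matrix (Fin n) (Fin n) ℂ) *
      Matrix.diagonal
        (fun i => if a - δ < hB.eigenvalues i ∧ hB.eigenvalues i < b + δ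
          then (0 : ℂ) else 1) *
      (hB.eigenvectorUnitary : Matrix (Fin n) (Fin n) ℂ)ᴴ) :
    ‖E * Fp‖ ≤ ‖A - B‖ / δ := by
  classical
  set c : ℝ := (a + b) / 2 with hc
  set r : ℝ := (b - a) / 2 with hrdef
  set lA := hA.eigenvalues with hlA
  set lB := hB.eigenvalues with hlB
  set U : Matrix (Fin n) (Fin n) ℂ := (hA.eigenvectorUnitary : Matrix (Fin n) (Fin n) ℂ) with hUdef
  set V : Matrix (Fin n) (Fin n) ℂ := (hB.eigenvectorUnitary : Matrix (Fin n) (Fin n) ℂ) with hVdef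
  have hUU : Uᴴ * U = 1 := by
    rw [← Matrix.star_eq_conjTranspose]
    exact Matrix.mem_unitaryGroup_iff'.mp (hA.eigenvectorUnitary).2
  have hVV : Vᴴ * V = 1 := by
    rw [← Matrix.star_eq_conjTranspose]
    exact Matrix.mem_unitaryGroup_iff'.mp (hB.eigenvectorUnitary).2
  set ΛA := Matrix.diagonal (RCLike.ofReal ∘ lA : Fin n → ℂ) with hΛA
  set ΜB := Matrix.diagonal (RCLike.ofReal ∘ lB : Fin n → ℂ) with hΜB
  have hAeq : A = U * ΛA * Uᴴ := by
    rw [← Matrix.star_eq_conjTranspose]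
    exact hA.spectral_theorem
  have hBeq : B = V * ΜB * Vᴴ := by
    rw [← Matrix.star_eq_conjTranspose]
    exact hB.spectral_theorem
  set dE : Fin n → ℂ := fun i => if a ≤ lA i ∧ lA i ≤ b then (1 : ℂ) else 0 with hdE
  set dF : Fin n → ℂ := fun i => if a - δ < lB i ∧ lB i < b + δ then (0 : ℂ) else 1 with hdF
  set DE := Matrix.diagonal dE with hDEdef
  set DF := Matrix.diagonal dF with hDFdef
  set lv : Fin n → ℂ := fun i => if a ≤ lA i ∧ lA i ≤ b then ((lA i - c : ℝ) : ℂ) else 0 with hlv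
  set nv : Fin n → ℂ := fun j =>
    if a - δ < lB j ∧ lB j < b + δ then ((r + δ : ℝ) : ℂ) else ((lB j - c : ℝ) : ℂ) with hnv
  set iv : Fin n → ℂ := fun j => (nv j)⁻¹ with hiv
  set L := Matrix.diagonal lv with hLdef
  set N := Matrix.diagonal nv with hNdef
  set Ninv := Matrix.diagonal iv with hNinvdef
  set mbc : Fin n → ℂ := fun j => ((lB j - c : ℝ) : ℂ) with hmbc
  set lac : Fin n → ℂ := fun i => ((lA i - c : ℝ) : ℂ) with hlac
  set cv : Fin n → ℂ := fun _ => ((c : ℝ) : ℂ) with hcv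
  set LAc := Matrix.diagonal lac with hLAc
  set MBc := Matrix.diagonal mbc with hMBc
  set Cd := Matrix.diagonal cv with hCd
  set W := Uᴴ * V with hWdef
  set M := DE * W * DF with hMdef
  clear_value c r lA lB U V ΛA ΜB dE dF DE DF lv nv iv L N Ninv mbc lac cv LAc MBc Cd W M
  have hr : 0 ≤ r := by rw [hrdef]; linarith
  have hrδ : 0 < r + δ := by linarith
  -- norms of unitaries
  have hone : ‖(1 : Matrix (Fin n) (Fin n) ℂ)‖ ≤ 1 := by
    rw [← Matrix.diagonal_one]
    exact dk_diag_norm_le _ 1 zero_le_one (fun i => by simp)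
  have hnU : ‖U‖ ≤ 1 := by
    have h := Matrix.l2_opNorm_conjTranspose_mul_self U
    rw [hUU] at h
    nlinarith [norm_nonneg U]
  have hnV : ‖V‖ ≤ 1 := by
    have h := Matrix.l2_opNorm_conjTranspose_mul_self V
    rw [hVV] at h
    nlinarith [norm_nonneg V]
  have hnUc : ‖Uᴴ‖ ≤ 1 := by rw [Matrix.l2_opNorm_conjTranspose]; exact hnU
  have hnVc : ‖Vᴴ‖ ≤ 1 := by rw [Matrix.l2_opNorm_conjTranspose]; exact hnV
  have hnDE : ‖DE‖ ≤ 1 := by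
    rw [hDEdef]
    refine dk_diag_norm_le _ 1 zero_le_one fun i => ?_
    simp only [hdE]
    by_cases h : a ≤ lA i ∧ lA i ≤ b
    · rw [if_pos h]; simp
    · rw [if_neg h]; simp
  have hnDF : ‖DF‖ ≤ 1 := by
    rw [hDFdef]
    refine dk_diag_norm_le _ 1 zero_le_one fun j => ?_
    simp only [hdF]
    by_cases h : a - δ < lB j ∧ lB j < b + δ
    · rw [if_pos h]; simp
    · rw [if_neg h]; simp
  -- entries of nv are nonzero
  have hnz : ∀ j, nv j ≠ 0 := by
    intro j
    simp only [hnv]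
    by_cases h : a - δ < lB j ∧ lB j < b + δ
    · rw [if_pos h]
      exact Complex.ofReal_ne_zero.mpr (by linarith)
    · rw [if_neg h]
      refine Complex.ofReal_ne_zero.mpr ?_
      rcases not_and_or.mp h with h1 | h1
      · push_neg at h1
        intro hh
        have h2 : lB j = c := by linarith
        rw [hc] at h2; linarith
      · push_neg at h1
        intro hh
        have h2 : lB j = c := by linarith
        rw [hc] at h2; linarith
  have hNNi : N * Ninv = 1 := by
    rw [hNdef, hNinvdef, Matrix.diagonal_mul_diagonal]
    have h : (fun j => nv j * iv j) = fun _ => (1 : ℂ) := by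
      funext j
      simp only [hiv]
      exact mul_inv_cancel₀ (hnz j)
    rw [h, Matrix.diagonal_one]
  -- norm bounds on L and Ninv
  have hnL : ‖L‖ ≤ r := by
    rw [hLdef]
    refine dk_diag_norm_le _ r hr fun i => ?_
    simp only [hlv]
    by_cases h : a ≤ lA i ∧ lA i ≤ b
    · rw [if_pos h, Complex.norm_real, Real.norm_eq_abs, abs_le]
      obtain ⟨h1, h2⟩ := h
      constructor <;> linarith [hc.le, hc.ge, hrdef.le, hrdef.ge]
    · rw [if_neg h]; simpa using hr
  have hnNinv : ‖Ninv‖ ≤ (r + δ)⁻¹ := by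
    rw [hNinvdef]
    refine dk_diag_norm_le _ _ (by positivity) fun j => ?_
    simp only [hiv, hnv]
    by_cases h : a - δ < lB j ∧ lB j < b + δ
    · rw [if_pos h, norm_inv, Complex.norm_real, Real.norm_eq_abs, abs_of_pos hrδ]
    · rw [if_neg h, norm_inv, Complex.norm_real, Real.norm_eq_abs]
      refine inv_anti₀ hrδ ?_
      rcases not_and_or.mp h with h1 | h1
      · push_neg at h1
        rw [le_abs]
        right
        linarith [hc.le, hc.ge, hrdef.le, hrdef.ge]
      · push_neg at h1
        rw [le_abs]
        left
        linarith [hc.le, hc.ge, hrdef.le, hrdef.ge]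
  -- relations between diagonal matrices
  have hLAcsub : LAc = ΛA - Cd := by
    rw [hLAc, hΛA, hCd, Matrix.diagonal_sub]
    refine congrArg Matrix.diagonal ?_
    funext i
    simp only [Pi.sub_apply, hlac, hcv, Function.comp_apply]
    push_cast
    rfl
  have hMBcsub : MBc = ΜB - Cd := by
    rw [hMBc, hΜB, hCd, Matrix.diagonal_sub]
    refine congrArg Matrix.diagonal ?_
    funext j
    simp only [Pi.sub_apply, hmbc, hcv, Function.comp_apply]
    push_cast
    rfl
  have hCdcomm : ∀ X : Matrix (Fin n) (Fin n) ℂ, Cd * X = X * Cd := by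
    intro X
    ext i j
    rw [hCd, Matrix.diagonal_mul, Matrix.mul_diagonal, hcv, mul_comm]
  have h1 : L * DE = DE * LAc := by
    rw [hLdef, hDEdef, hLAc, Matrix.diagonal_mul_diagonal, Matrix.diagonal_mul_diagonal]
    refine congrArg Matrix.diagonal ?_
    funext i
    simp only [hlv, hdE, hlac]
    by_cases h : a ≤ lA i ∧ lA i ≤ b
    · rw [if_pos h, if_pos h]; ring
    · rw [if_neg h, if_neg h]; ring
  have h2 : DF * N = MBc * DF := by
    rw [hDFdef, hNdef, hMBc, Matrix.diagonal_mul_diagonal, Matrix.diagonal_mul_diagonal]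
    refine congrArg Matrix.diagonal ?_
    funext j
    simp only [hdF, hnv, hmbc]
    by_cases h : a - δ < lB j ∧ lB j < b + δ
    · rw [if_pos h, if_pos h]; ring
    · rw [if_neg h, if_neg h]; ring
  have h3 : LAc * W - W * MBc = Uᴴ * (A - B) * V := by
    have e2 : Uᴴ * (U * ΛA * Uᴴ) * V = ΛA * W := by
      rw [show Uᴴ * (U * ΛA * Uᴴ) * V = (Uᴴ * U) * (ΛA * (Uᴴ * V)) by noncomm_ring, hUU,
        one_mul, hWdef]
    have e3 : Uᴴ * (V * ΜB * Vᴴ) * V = W * ΜB := by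
      rw [show Uᴴ * (V * ΜB * Vᴴ) * V = (Uᴴ * V) * ΜB * (Vᴴ * V) by noncomm_ring, hVV,
        Matrix.mul_one, hWdef]
    calc LAc * W - W * MBc = (ΛA - Cd) * W - W * (ΜB - Cd) := by rw [hLAcsub, hMBcsub]
      _ = ΛA * W - Cd * W - (W * ΜB - W * Cd) := by noncomm_ring
      _ = ΛA * W - W * ΜB := by rw [hCdcomm W]; abel
      _ = Uᴴ * (U * ΛA * Uᴴ) * V - Uᴴ * (V * ΜB * Vᴴ) * V := by rw [e2, e3]
      _ = Uᴴ * (A - B) * V := by rw [← hAeq, ← hBeq]; noncomm_ring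
  have key : L * M - M * N = DE * (Uᴴ * (A - B) * V) * DF := by
    calc L * M - M * N = (L * DE) * W * DF - DE * W * (DF * N) := by rw [hMdef]; noncomm_ring
      _ = (DE * LAc) * W * DF - DE * W * (MBc * DF) := by rw [h1, h2]
      _ = DE * (LAc * W - W * MBc) * DF := by noncomm_ring
      _ = DE * (Uᴴ * (A - B) * V) * DF := by rw [h3]
  have hK : ‖L * M - M * N‖ ≤ ‖A - B‖ := by
    rw [key]
    exact le_trans (dk_sandwich _ _ _ hnDE hnDF) (dk_sandwich _ _ _ hnUc hnV)
  have hMrec : M = L * M * Ninv - (L * M - M * N) * Ninv := by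
    have hM1 : M * N * Ninv = M := by rw [Matrix.mul_assoc, hNNi, Matrix.mul_one]
    calc M = M * N * Ninv := hM1.symm
      _ = L * M * Ninv - (L * M - M * N) * Ninv := by noncomm_ring
  have hMbound : ‖M‖ ≤ r * ‖M‖ * (r + δ)⁻¹ + ‖A - B‖ * (r + δ)⁻¹ := by
    conv_lhs => rw [hMrec]
    refine le_trans (norm_sub_le _ _) ?_
    gcongr
    · calc ‖L * M * Ninv‖ ≤ ‖L * M‖ * ‖Ninv‖ := Matrix.l2_opNorm_mul _ _
        _ ≤ r * ‖M‖ * (r + δ)⁻¹ := by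
            have h4 := Matrix.l2_opNorm_mul L M
            have h0 : (0:ℝ) ≤ ‖M‖ := norm_nonneg _
            have h5 : (0:ℝ) ≤ ‖Ninv‖ := norm_nonneg _
            exact mul_le_mul (le_trans h4 (by nlinarith [norm_nonneg L])) hnNinv h5
              (mul_nonneg hr h0)
    · calc ‖(L * M - M * N) * Ninv‖ ≤ ‖L * M - M * N‖ * ‖Ninv‖ := Matrix.l2_opNorm_mul _ _
        _ ≤ ‖A - B‖ * (r + δ)⁻¹ :=
            mul_le_mul hK hnNinv (norm_nonneg _) (norm_nonneg _)
  have hMfin : ‖M‖ ≤ ‖A - B‖ / δ := by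
    have e1 : r * ‖M‖ * (r + δ)⁻¹ + ‖A - B‖ * (r + δ)⁻¹ = (r * ‖M‖ + ‖A - B‖) / (r + δ) := by
      field_simp
    rw [e1, le_div_iff₀ hrδ] at hMbound
    rw [le_div_iff₀ hδ]
    ring_nf at hMbound ⊢
    linarith
  have hEF : E * Fp = U * (M * Vᴴ) := by
    rw [hE, hF, hMdef, hWdef]
    simp only [Matrix.mul_assoc]
  calc ‖E * Fp‖ = ‖U * (M * Vᴴ)‖ := by rw [hEF]
    _ ≤ ‖U‖ * ‖M * Vᴴ‖ := Matrix.l2_opNorm_mul _ _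
    _ ≤ ‖M‖ := by
        have h1 := Matrix.l2_opNorm_mul M Vᴴ
        have h2 : (0:ℝ) ≤ ‖M * Vᴴ‖ := norm_nonneg _
        have h3 : (0:ℝ) ≤ ‖M‖ := norm_nonneg _
        nlinarith
    _ ≤ ‖A - B‖ / δ := hMfin
end

section
/- Let A = [[a₁₁, a₁₂],[a₁₂, a₂₂]] be a 2×2 real symmetric matrix and let X > 0. If |a₁₁| > X and |a₂₂ − a₁₁a₁₂²/(a₁₁²−X²)| ≥ √((a₁₁⁴X² + 2a₁₁²a₁₂²X² − a₁₁²X⁴ + a₁₂⁴X² − 2a₁₂²X⁴))/|a₁₁²−X²|, then both eigenvalues of A have absolute value at least X. -/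
open Matrix

/-- Core polynomial inequality, via the identity
`E*(a-m)^2 - F^2 = (a^2-X^2)*((X^2-m^2)*(b^2+a*(a-m))^2 + X^2*m^2*(a-m)^2)`. -/
theorem two_heavy_core (a b X m : ℝ) (hX : 0 < X) (h1 : X ^ 2 < a ^ 2) (h2 : m ^ 2 < X ^ 2) :
    ((a ^ 2 - X ^ 2) * m * (a - m) + b ^ 2 * (a * m - X ^ 2)) ^ 2
      < (a ^ 4 * X ^ 2 + 2 * a ^ 2 * b ^ 2 * X ^ 2 - a ^ 2 * X ^ 4 + b ^ 4 * X ^ 2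
          - 2 * b ^ 2 * X ^ 4) * (a - m) ^ 2 := by
  have hD : 0 < a ^ 2 - X ^ 2 := by linarith
  have hs : 0 < X ^ 2 - m ^ 2 := by linarith
  have key : (a ^ 4 * X ^ 2 + 2 * a ^ 2 * b ^ 2 * X ^ 2 - a ^ 2 * X ^ 4 + b ^ 4 * X ^ 2
          - 2 * b ^ 2 * X ^ 4) * (a - m) ^ 2
      - ((a ^ 2 - X ^ 2) * m * (a - m) + b ^ 2 * (a * m - X ^ 2)) ^ 2
      = (a ^ 2 - X ^ 2) * ((X ^ 2 - m ^ 2) * (b ^ 2 + a * (a - m)) ^ 2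
          + X ^ 2 * m ^ 2 * (a - m) ^ 2) := by ring
  have hbr : 0 < (X ^ 2 - m ^ 2) * (b ^ 2 + a * (a - m)) ^ 2
      + X ^ 2 * m ^ 2 * (a - m) ^ 2 := by
    rcases eq_or_ne m 0 with hm | hm
    · subst hm
      have hb : 0 < b ^ 2 + a * (a - 0) := by nlinarith
      have : 0 < (b ^ 2 + a * (a - 0)) ^ 2 := by positivity
      nlinarith
    · have hu : a - m ≠ 0 := by
        intro h
        have : a = m := by linarith
        rw [this] at h1; linarith
      have : 0 < X ^ 2 * m ^ 2 * (a - m) ^ 2 := by positivity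
      nlinarith [sq_nonneg (b ^ 2 + a * (a - m)), mul_nonneg hs.le (sq_nonneg (b ^ 2 + a * (a - m)))]
  nlinarith [mul_pos hD hbr]

/-- One branch of the analytic condition guaranteeing that both eigenvalues of a 2×2 real
symmetric matrix lie outside (−X, X): if |a₁₁| > X and |a₂₂ − Y₁| ≥ Y₂, then both
eigenvalues have absolute value at least X. -/
theorem two_heavy_neutrinos (a11 a12 a22 X : ℝ) (hX : 0 < X)
    (A : Matrix (Fin 2) (Fin 2) ℝ) (hAdef : A = !![a11, a12; a12, a22])
    (hA : A.IsHermitian)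
    (h1 : X < |a11|)
    (h2 : Real.sqrt (a11 ^ 4 * X ^ 2 + 2 * a11 ^ 2 * a12 ^ 2 * X ^ 2 - a11 ^ 2 * X ^ 4 +
            a12 ^ 4 * X ^ 2 - 2 * a12 ^ 2 * X ^ 4) / |a11 ^ 2 - X ^ 2|
          ≤ |a22 - a11 * a12 ^ 2 / (a11 ^ 2 - X ^ 2)|) :
    ∀ i, X ≤ |hA.eigenvalues i| := by
  intro i
  by_contra hcon
  push_neg at hcon
  set μ := hA.eigenvalues i with hμ
  -- eigenvector equation
  have hv : A *ᵥ ⇑(hA.eigenvectorBasis i) = μ • ⇑(hA.eigenvectorBasis i) :=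
    hA.mulVec_eigenvectorBasis i
  set v : Fin 2 → ℝ := ⇑(hA.eigenvectorBasis i) with hvdef
  have hvne : ∃ j, v j ≠ 0 := by
    by_contra h
    push_neg at h
    have : (hA.eigenvectorBasis i : EuclideanSpace ℝ (Fin 2)) = 0 := by
      ext j; exact h j
    exact hA.eigenvectorBasis.orthonormal.ne_zero i this
  have e0 := congrFun hv 0
  have e1 := congrFun hv 1
  rw [hAdef] at e0 e1
  simp [Matrix.mulVec, dotProduct, Fin.sum_univ_two] at e0 e1
  -- e0 : a11 * v 0 + a12 * v 1 = μ * v 0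
  -- e1 : a12 * v 0 + a22 * v 1 = μ * v 1
  have hdet : (a11 - μ) * (a22 - μ) - a12 ^ 2 = 0 := by
    obtain ⟨j, hj⟩ := hvne
    fin_cases j
    · have h0 : ((a11 - μ) * (a22 - μ) - a12 ^ 2) * v 0 = 0 := by linear_combination (a22 - μ) * e0 - a12 * e1
      rcases mul_eq_zero.1 h0 with h | h
      · exact h
      · exact absurd h hj
    · have h0 : ((a11 - μ) * (a22 - μ) - a12 ^ 2) * v 1 = 0 := by linear_combination (a11 - μ) * e1 - a12 * e0
      rcases mul_eq_zero.1 h0 with h | h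
      · exact h
      · exact absurd h hj
  -- abbreviations
  have hX2 : X ^ 2 < a11 ^ 2 := by
    have := abs_nonneg a11
    nlinarith [sq_abs a11]
  have hm2 : μ ^ 2 < X ^ 2 := by
    have := abs_nonneg μ
    nlinarith [sq_abs μ]
  have hD : 0 < a11 ^ 2 - X ^ 2 := by linarith
  have hDne : a11 ^ 2 - X ^ 2 ≠ 0 := ne_of_gt hD
  have hu : a11 - μ ≠ 0 := by
    intro h
    have : a11 = μ := by linarith
    rw [this] at hX2; linarith
  set E := a11 ^ 4 * X ^ 2 + 2 * a11 ^ 2 * a12 ^ 2 * X ^ 2 - a11 ^ 2 * X ^ 4 +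
      a12 ^ 4 * X ^ 2 - 2 * a12 ^ 2 * X ^ 4 with hE
  -- from h2 : sqrt E ≤ |(a11^2 - X^2) * a22 - a11 * a12^2|
  have hstep1 : Real.sqrt E ≤ |(a11 ^ 2 - X ^ 2) * a22 - a11 * a12 ^ 2| := by
    have h3 : Real.sqrt E ≤ |a11 ^ 2 - X ^ 2| * |a22 - a11 * a12 ^ 2 / (a11 ^ 2 - X ^ 2)| := by
      have := (div_le_iff₀ (abs_pos.2 hDne)).1 h2
      linarith [this, mul_comm (|a22 - a11 * a12 ^ 2 / (a11 ^ 2 - X ^ 2)|) (|a11 ^ 2 - X ^ 2|)]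
    calc Real.sqrt E ≤ |a11 ^ 2 - X ^ 2| * |a22 - a11 * a12 ^ 2 / (a11 ^ 2 - X ^ 2)| := h3
      _ = |(a11 ^ 2 - X ^ 2) * (a22 - a11 * a12 ^ 2 / (a11 ^ 2 - X ^ 2))| := (abs_mul _ _).symm
      _ = |(a11 ^ 2 - X ^ 2) * a22 - a11 * a12 ^ 2| := by
          congr 1; field_simp
  -- F' := ((a11^2-X^2)*a22 - a11*a12^2) * (a11-μ) equals F via hdet
  have hF : ((a11 ^ 2 - X ^ 2) * a22 - a11 * a12 ^ 2) * (a11 - μ)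
      = (a11 ^ 2 - X ^ 2) * μ * (a11 - μ) + a12 ^ 2 * (a11 * μ - X ^ 2) := by
    linear_combination (a11 ^ 2 - X ^ 2) * hdet
  have hcore := two_heavy_core a11 a12 X μ hX hX2 hm2
  rw [← hF] at hcore
  -- hcore : (F')^2 < E * (a11-μ)^2
  have hlt : |((a11 ^ 2 - X ^ 2) * a22 - a11 * a12 ^ 2) * (a11 - μ)|
      < Real.sqrt E * |a11 - μ| := by
    have hE0 : 0 < E := by
      by_contra hE0
      push_neg at hE0
      nlinarith [sq_nonneg (((a11 ^ 2 - X ^ 2) * a22 - a11 * a12 ^ 2) * (a11 - μ)),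
        sq_nonneg (a11 - μ), mul_nonpos_of_nonpos_of_nonneg hE0 (sq_nonneg (a11 - μ))]
    have hsq : (Real.sqrt E * |a11 - μ|) ^ 2 = E * (a11 - μ) ^ 2 := by
      rw [mul_pow, Real.sq_sqrt hE0.le, sq_abs]
    apply lt_of_pow_lt_pow_left₀ 2 (by positivity)
    rw [hsq, sq_abs]
    exact hcore
  have hge : Real.sqrt E * |a11 - μ|
      ≤ |((a11 ^ 2 - X ^ 2) * a22 - a11 * a12 ^ 2) * (a11 - μ)| := by
    rw [abs_mul]
    exact mul_le_mul_of_nonneg_right hstep1 (abs_nonneg _)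
  linarith
end
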